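/- Let (Σ, <) be a well-founded partial order. The relations ▷+ and ▷▷+ coincide on unmarked trees: for all trees s, t over Σ containing no marked and no energized symbols, s ▷+ t if and only if s ▷▷+ t. -/

import Mathlib

namespace StarGames

/-- Unranked terms over signature `σ` and variables `X`. -/
inductive Term (σ : Type) (X : Type) : Type
  | var : X → Term σ X
  | app : σ → List (Term σ X) → Term σ X

variable {σ σ' X : Type}

/-- Relabeling of symbols. -/
def Term.relabel (h : σ → σ') : Term σ X → Term σ' X
  | .var x => .var x
  | .app f ts => .app (h f) (ts.attach.map fun ⟨t, _⟩ => t.relabel h)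
decreasing_by
  have := List.sizeOf_lt_of_mem ‹_ ∈ ts›
  simp only [Term.app.sizeOf_spec]
  omega

/-- Closure of a root-step relation under contexts (rewriting inside one argument). -/
inductive Rewrite (R : Term σ X → Term σ X → Prop) : Term σ X → Term σ X → Prop
  | root {s t : Term σ X} : R s t → Rewrite R s t
  | congr {s t : Term σ X} (f : σ) (pre post : List (Term σ X)) :
      Rewrite R s t →
      Rewrite R (Term.app f (pre ++ s :: post)) (Term.app f (pre ++ t :: post))

/-- Root steps of the swap TRS:  f(u⃗,x,y,w⃗) → f(u⃗,y,x,w⃗). -/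
inductive SwapRoot : Term σ X → Term σ X → Prop
  | swap (f : σ) (us : List (Term σ X)) (x y : Term σ X) (ws : List (Term σ X)) :
      SwapRoot (Term.app f (us ++ x :: y :: ws)) (Term.app f (us ++ y :: x :: ws))

/-- One swap step, anywhere in a term. -/
def SwapStep : Term σ X → Term σ X → Prop := Rewrite (SwapRoot (σ := σ) (X := X))

/-- `≃` : the equivalence relation generated by swap steps. -/
def TermEquiv : Term σ X → Term σ X → Prop := Relation.EqvGen SwapStep

def treeSetoid (σ X : Type) : Setoid (Term σ X) :=
  ⟨TermEquiv, Relation.EqvGen.is_equivalence _⟩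

/-- (Unordered) trees: terms modulo permutation of arguments. -/
def Tree (σ X : Type) := Quotient (treeSetoid σ X)

def Tree.mk (t : Term σ X) : Tree σ X := Quotient.mk (treeSetoid σ X) t

/-- Rewrite relation induced on trees by a root-step relation. -/
def TreeRel (R : Term σ X → Term σ X → Prop) : Tree σ X → Tree σ X → Prop :=
  fun a b => ∃ s t : Term σ X, a = Tree.mk s ∧ b = Tree.mk t ∧ Rewrite R s t

/-- Terms all of whose symbols satisfy `p`. -/
inductive Uses (p : σ → Prop) : Term σ X → Prop
  | var (x : X) : Uses p (Term.var x)
  | app (f : σ) (ts : List (Term σ X)) :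
      p f → (∀ t ∈ ts, Uses p t) → Uses p (Term.app f ts)

end StarGames

namespace StarGames

variable {σ X : Type}

/-- Markings of symbols: plain (`f ∈ Σ`), starred (`f⋆ ∈ Σ⋆`), or
energized (`f^n ∈ Σ^ω`). -/
inductive Mark : Type
  | plain : Mark
  | star : Mark
  | en : ℕ → Mark

/-- Root steps of the TRS `Star` over `Σ ∪ Σ⋆` (inside the combined
signature `Σ ∪ Σ⋆ ∪ Σ^ω`). -/
inductive StarRootM (lt : σ → σ → Prop) :
    Term (σ × Mark) X → Term (σ × Mark) X → Prop
  | put (f : σ) (ts : List (Term (σ × Mark) X)) :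
      StarRootM lt (.app (f, Mark.plain) ts) (.app (f, Mark.star) ts)
  | select (f : σ) (xs : List (Term (σ × Mark) X)) (y : Term (σ × Mark) X)
      (zs : List (Term (σ × Mark) X)) :
      StarRootM lt (.app (f, Mark.star) (xs ++ y :: zs)) y
  | copy (f g : σ) (k : ℕ) (ts : List (Term (σ × Mark) X)) :
      lt g f →
      StarRootM lt (.app (f, Mark.star) ts)
        (.app (g, Mark.plain) (List.replicate k (Term.app (f, Mark.star) ts)))
  | down (f g : σ) (k : ℕ) (xs ys zs : List (Term (σ × Mark) X)) :
      StarRootM lt (.app (f, Mark.star) (xs ++ Term.app (g, Mark.plain) ys :: zs))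
        (.app (f, Mark.plain)
          (xs ++ List.replicate k (Term.app (g, Mark.star) ys) ++ zs))

/-- Root steps of the TRS `Star^ω` over `Σ ∪ Σ^ω` (inside the combined
signature `Σ ∪ Σ⋆ ∪ Σ^ω`). -/
inductive StarOmegaRootM (lt : σ → σ → Prop) :
    Term (σ × Mark) X → Term (σ × Mark) X → Prop
  | put (f : σ) (n : ℕ) (ts : List (Term (σ × Mark) X)) :
      StarOmegaRootM lt (.app (f, Mark.plain) ts) (.app (f, Mark.en n) ts)
  | select (f : σ) (n : ℕ) (xs : List (Term (σ × Mark) X)) (y : Term (σ × Mark) X)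
      (zs : List (Term (σ × Mark) X)) :
      StarOmegaRootM lt (.app (f, Mark.en (n + 1)) (xs ++ y :: zs)) y
  | copy (f g : σ) (n k : ℕ) (ts : List (Term (σ × Mark) X)) :
      lt g f →
      StarOmegaRootM lt (.app (f, Mark.en (n + 1)) ts)
        (.app (g, Mark.plain) (List.replicate k (Term.app (f, Mark.en n) ts)))
  | down (f g : σ) (n k : ℕ) (xs ys zs : List (Term (σ × Mark) X)) :
      StarOmegaRootM lt
        (.app (f, Mark.en (n + 1)) (xs ++ Term.app (g, Mark.plain) ys :: zs))
        (.app (f, Mark.plain)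
          (xs ++ List.replicate k (Term.app (g, Mark.en n) ys) ++ zs))

/-- A term is unmarked if all its symbols are plain symbols of `Σ`. -/
def UnmarkedTerm : Term (σ × Mark) X → Prop :=
  Uses (fun a : σ × Mark => a.2 = Mark.plain)

section Aux

variable {σ σ' X : Type}

@[simp] theorem Term.relabel_var (h : σ → σ') (x : X) :
    (Term.var x : Term σ X).relabel h = Term.var x := by
  rw [Term.relabel]

@[simp] theorem Term.relabel_app (h : σ → σ') (f : σ) (ts : List (Term σ X)) :
    (Term.app f ts).relabel h = Term.app (h f) (ts.map (·.relabel h)) := by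
  rw [Term.relabel]
  congr 1
  exact List.attach_map_val (l := ts) (f := (·.relabel h))

def Mark.erase : Mark → Mark
  | .en _ => .star
  | m => m

def eraseMark (p : σ × Mark) : σ × Mark := (p.1, p.2.erase)

@[simp] theorem eraseMark_plain (f : σ) : eraseMark (f, Mark.plain) = (f, Mark.plain) := rfl
@[simp] theorem eraseMark_star (f : σ) : eraseMark (f, Mark.star) = (f, Mark.star) := rfl
@[simp] theorem eraseMark_en (f : σ) (n : ℕ) : eraseMark (f, Mark.en n) = (f, Mark.star) := rfl

theorem eraseMark_eq_plain {p : σ × Mark} {f : σ} (h : eraseMark p = (f, Mark.plain)) :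
    p = (f, Mark.plain) := by
  obtain ⟨g, m⟩ := p
  cases m <;> simp_all [eraseMark, Mark.erase]

theorem eraseMark_eq_star {p : σ × Mark} {f : σ} (h : eraseMark p = (f, Mark.star))
    (hns : p.2 ≠ Mark.star) : ∃ m, p = (f, Mark.en m) := by
  obtain ⟨g, m⟩ := p
  cases m <;> simp_all [eraseMark, Mark.erase]

end Aux
section Aux2

variable {σ σ' X : Type}

theorem Uses.mono {p q : σ → Prop} (h : ∀ a, p a → q a) :
    ∀ {t : Term σ X}, Uses p t → Uses q t := by
  intro t ht
  induction ht with
  | var x => exact .var x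
  | app f ts hf _ ih => exact .app f ts (h f hf) ih

theorem uses_app_iff {p : σ → Prop} {f : σ} {ts : List (Term σ X)} :
    Uses p (Term.app f ts) ↔ p f ∧ ∀ t ∈ ts, Uses p t := by
  constructor
  · intro h
    cases h with
    | app _ _ hf hts => exact ⟨hf, hts⟩
  · rintro ⟨hf, hts⟩
    exact .app f ts hf hts

def Good (n : ℕ) (a : σ × Mark) : Prop :=
  a.2 ≠ Mark.star ∧ ∀ m, a.2 = Mark.en m → n ≤ m

theorem Good.mono {m n : ℕ} (h : m ≤ n) {a : σ × Mark} (ha : Good n a) : Good m a :=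
  ⟨ha.1, fun k hk => le_trans h (ha.2 k hk)⟩

def Energetic (n : ℕ) : Term (σ × Mark) X → Prop := Uses (Good n)

theorem Energetic.mono {m n : ℕ} (h : m ≤ n) {t : Term (σ × Mark) X}
    (ht : Energetic n t) : Energetic m t :=
  Uses.mono (fun _ ha => ha.mono h) ht

theorem Energetic.of_unmarked {s : Term (σ × Mark) X} (hs : UnmarkedTerm s) (n : ℕ) :
    Energetic n s :=
  Uses.mono (fun a ha => ⟨by simp [ha], fun m hm => by simp [ha] at hm⟩) hs

theorem relabel_eq_app {h : σ → σ'} {v : Term σ X} {c : σ'} {ts : List (Term σ' X)}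
    (e : v.relabel h = .app c ts) :
    ∃ p vs, v = .app p vs ∧ h p = c ∧ vs.map (·.relabel h) = ts := by
  cases v with
  | var x => simp at e
  | app p vs =>
    rw [Term.relabel_app] at e
    injection e with h1 h2
    exact ⟨p, vs, rfl, h1, h2⟩

theorem relabel_eraseMark_of_unmarked {s : Term (σ × Mark) X} (hs : UnmarkedTerm s) :
    s.relabel eraseMark = s := by
  induction hs with
  | var x => simp
  | app f ts hf _ ih =>
    rw [Term.relabel_app]
    obtain ⟨g, m⟩ := f
    simp only at hf
    subst hf
    congr 1
    conv_rhs => rw [← List.map_id ts]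
    exact List.map_congr_left ih

theorem eq_map_self {α : Type} {g : α → α} :
    ∀ (vs : List α), (∀ t ∈ vs.map g, ∀ w, g w = t → w = t) → vs.map g = vs := by
  intro vs
  induction vs with
  | nil => intro; rfl
  | cons a l ihl =>
    intro h
    simp only [List.map_cons, List.cons.injEq]
    exact ⟨(h (g a) (by simp) a rfl).symm, ihl (fun t ht w hw => h t (by simp [ht]) w hw)⟩

theorem eq_of_relabel_eraseMark {b : Term (σ × Mark) X} (hb : UnmarkedTerm b) :
    ∀ w : Term (σ × Mark) X, w.relabel eraseMark = b → w = b := by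
  induction hb with
  | var x =>
    intro w hw
    cases w with
    | var y => simpa using hw
    | app p vs => simp at hw
  | app f ts hf _ ih =>
    intro w hw
    obtain ⟨p, vs, rfl, hp, hvs⟩ := relabel_eq_app hw
    obtain ⟨g, m⟩ := f
    simp only at hf
    subst hf
    obtain rfl := eraseMark_eq_plain hp
    congr 1
    subst hvs
    exact (eq_map_self vs ih).symm

end Aux2
section Aux3

variable {σ σ' X : Type}

theorem SwapRoot.symm' {a b : Term σ X} (h : SwapRoot a b) : SwapRoot b a := by
  cases h with
  | swap f us x y ws => exact .swap f us y x ws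

theorem SwapStep.symm' {a b : Term σ X} (h : SwapStep a b) : SwapStep b a := by
  induction h with
  | root h => exact .root h.symm'
  | congr f pre post _ ih => exact .congr f pre post ih

theorem Uses.of_swapStep {p : σ → Prop} {a b : Term σ X} (h : SwapStep a b)
    (ha : Uses p a) : Uses p b := by
  induction h with
  | root h =>
    cases h with
    | swap f us x y ws =>
      rw [uses_app_iff] at ha ⊢
      refine ⟨ha.1, fun u hu => ha.2 u ?_⟩
      simp only [List.mem_append, List.mem_cons] at hu ⊢
      tauto
  | congr f pre post _ ih =>
    rw [uses_app_iff] at ha ⊢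
    refine ⟨ha.1, fun u hu => ?_⟩
    rcases List.mem_append.1 hu with h1 | h2
    · exact ha.2 u (by simp [h1])
    · rcases List.mem_cons.1 h2 with rfl | h3
      · exact ih (ha.2 _ (by simp))
      · exact ha.2 u (by simp [h3])

theorem uses_iff_of_equiv {p : σ → Prop} {a b : Term σ X} (h : TermEquiv a b) :
    Uses p a ↔ Uses p b := by
  induction h with
  | rel x y h => exact ⟨Uses.of_swapStep h, Uses.of_swapStep h.symm'⟩
  | refl => exact Iff.rfl
  | symm _ _ _ ih => exact ih.symm
  | trans _ _ _ _ _ ih1 ih2 => exact ih1.trans ih2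

theorem Rewrite.relabel {h : σ → σ'} {R : Term σ X → Term σ X → Prop}
    {R' : Term σ' X → Term σ' X → Prop}
    (hR : ∀ a b, R a b → R' (a.relabel h) (b.relabel h)) {a b : Term σ X}
    (hab : Rewrite R a b) : Rewrite R' (a.relabel h) (b.relabel h) := by
  induction hab with
  | root h' => exact .root (hR _ _ h')
  | congr f pre post _ ih =>
    simp only [Term.relabel_app, List.map_append, List.map_cons]
    exact .congr _ _ _ ih

theorem SwapRoot.relabel {h : σ → σ'} {a b : Term σ X} (hab : SwapRoot a b) :
    SwapRoot (a.relabel h) (b.relabel h) := by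
  cases hab with
  | swap f us x y ws =>
    rw [Term.relabel_app, Term.relabel_app]
    simp only [List.map_append, List.map_cons]
    exact .swap _ _ _ _ _

theorem TermEquiv.relabel {h : σ → σ'} {a b : Term σ X} (hab : TermEquiv a b) :
    TermEquiv (a.relabel h) (b.relabel h) := by
  induction hab with
  | rel x y hxy => exact .rel _ _ (Rewrite.relabel (fun _ _ hr => hr.relabel) hxy)
  | refl x => exact .refl _
  | symm _ _ _ ih => exact .symm _ _ ih
  | trans _ _ _ _ _ ih1 ih2 => exact .trans _ _ _ ih1 ih2

theorem Tree.mk_eq_mk {a b : Term σ X} : Tree.mk a = Tree.mk b ↔ TermEquiv a b :=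
  ⟨fun h => Quotient.exact h, fun h => Quotient.sound h⟩

def Tree.relabelE : Tree (σ × Mark) X → Tree (σ × Mark) X :=
  Quot.map (Term.relabel eraseMark) (fun _ _ h => TermEquiv.relabel h)

@[simp] theorem Tree.relabelE_mk (t : Term (σ × Mark) X) :
    Tree.relabelE (Tree.mk t) = Tree.mk (t.relabel eraseMark) := rfl

theorem starOmegaRoot_relabel {lt : σ → σ → Prop} {a b : Term (σ × Mark) X}
    (h : StarOmegaRootM lt a b) :
    StarRootM lt (a.relabel eraseMark) (b.relabel eraseMark) := by
  cases h with
  | put f n ts =>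
    rw [Term.relabel_app, Term.relabel_app, eraseMark_plain, eraseMark_en]
    exact .put f _
  | select f n xs y zs =>
    rw [Term.relabel_app, eraseMark_en, List.map_append, List.map_cons]
    exact .select f _ _ _
  | copy f g n k ts hlt =>
    rw [Term.relabel_app, Term.relabel_app, eraseMark_en, eraseMark_plain,
      List.map_replicate, Term.relabel_app, eraseMark_en]
    exact .copy f g k _ hlt
  | down f g n k xs ys zs =>
    rw [Term.relabel_app, Term.relabel_app, eraseMark_en, eraseMark_plain,
      List.map_append, List.map_cons, Term.relabel_app, eraseMark_plain,
      List.map_append, List.map_append, List.map_replicate, Term.relabel_app, eraseMark_en]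
    exact .down f g k _ _ _

theorem treeRel_omega_to_star {lt : σ → σ → Prop} {A B : Tree (σ × Mark) X}
    (h : TreeRel (StarOmegaRootM lt) A B) :
    TreeRel (StarRootM lt) A.relabelE B.relabelE := by
  obtain ⟨s, t, rfl, rfl, hst⟩ := h
  exact ⟨s.relabel eraseMark, t.relabel eraseMark, rfl, rfl,
    Rewrite.relabel (fun _ _ hr => starOmegaRoot_relabel hr) hst⟩

end Aux3
section Aux4

variable {σ X : Type}

theorem swapStep_lift {a a' v : Term (σ × Mark) X} (h : SwapStep a a')
    (hv : v.relabel eraseMark = a) :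
    ∃ v', SwapStep v v' ∧ v'.relabel eraseMark = a' := by
  induction h generalizing v with
  | root h =>
    cases h with
    | swap f us x y ws =>
      obtain ⟨p, vs, rfl, hp, hvs⟩ := relabel_eq_app hv
      obtain ⟨us', rest, rfl, hus, hrest⟩ := List.map_eq_append_iff.1 hvs
      obtain ⟨x', rest2, rfl, hx, hrest2⟩ := List.map_eq_cons_iff.1 hrest
      obtain ⟨y', ws', rfl, hy, hws⟩ := List.map_eq_cons_iff.1 hrest2
      refine ⟨Term.app p (us' ++ y' :: x' :: ws'), .root (.swap p us' x' y' ws'), ?_⟩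
      rw [Term.relabel_app]
      simp [hus, hx, hy, hws, hp]
  | congr f pre post hst ih =>
    obtain ⟨p, vs, rfl, hp, hvs⟩ := relabel_eq_app hv
    obtain ⟨pre', rest, rfl, hpre, hrest⟩ := List.map_eq_append_iff.1 hvs
    obtain ⟨s', post', rfl, hs, hpost⟩ := List.map_eq_cons_iff.1 hrest
    obtain ⟨t', hst', ht'⟩ := ih hs
    refine ⟨Term.app p (pre' ++ t' :: post'), .congr p pre' post' hst', ?_⟩
    rw [Term.relabel_app]
    simp [hpre, hpost, ht', hp]

theorem termEquiv_lift {a a' : Term (σ × Mark) X} (h : TermEquiv a a') :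
    (∀ v, v.relabel eraseMark = a → ∃ v', TermEquiv v v' ∧ v'.relabel eraseMark = a') ∧
    (∀ v, v.relabel eraseMark = a' → ∃ v', TermEquiv v v' ∧ v'.relabel eraseMark = a) := by
  induction h with
  | rel x y h =>
    constructor
    · intro v hv
      obtain ⟨v', h1, h2⟩ := swapStep_lift h hv
      exact ⟨v', .rel _ _ h1, h2⟩
    · intro v hv
      obtain ⟨v', h1, h2⟩ := swapStep_lift h.symm' hv
      exact ⟨v', .rel _ _ h1, h2⟩
  | refl x => exact ⟨fun v hv => ⟨v, .refl v, hv⟩, fun v hv => ⟨v, .refl v, hv⟩⟩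
  | symm x y _ ih => exact ⟨ih.2, ih.1⟩
  | trans x y z _ _ ih1 ih2 =>
    constructor
    · intro v hv
      obtain ⟨v1, e1, h1⟩ := ih1.1 v hv
      obtain ⟨v2, e2, h2⟩ := ih2.1 v1 h1
      exact ⟨v2, .trans _ _ _ e1 e2, h2⟩
    · intro v hv
      obtain ⟨v1, e1, h1⟩ := ih2.2 v hv
      obtain ⟨v2, e2, h2⟩ := ih1.2 v1 h1
      exact ⟨v2, .trans _ _ _ e1 e2, h2⟩

theorem good_en {n m : ℕ} (f : σ) (h : n ≤ m) : Good n ((f, Mark.en m) : σ × Mark) :=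
  ⟨by simp, fun k hk => by simp only at hk; cases hk; exact h⟩

theorem energetic_app_iff {n : ℕ} {f : σ × Mark} {ts : List (Term (σ × Mark) X)} :
    Energetic n (Term.app f ts) ↔ Good n f ∧ ∀ t ∈ ts, Energetic n t :=
  uses_app_iff

theorem good_plain (n : ℕ) (f : σ) : Good n ((f, Mark.plain) : σ × Mark) :=
  ⟨by simp, fun m hm => by simp at hm⟩

theorem step_lift {lt : σ → σ → Prop} {n : ℕ} {a b v : Term (σ × Mark) X}
    (h : StarRootM lt a b) (hv : v.relabel eraseMark = a) (he : Energetic (n + 1) v) :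
    ∃ w, StarOmegaRootM lt v w ∧ w.relabel eraseMark = b ∧ Energetic n w := by
  cases h with
  | put f ts =>
    obtain ⟨p, vs, rfl, hp, hvs⟩ := relabel_eq_app hv
    obtain rfl := eraseMark_eq_plain hp
    replace he := energetic_app_iff.1 he
    refine ⟨Term.app (f, Mark.en n) vs, .put f n vs, ?_, ?_⟩
    · rw [Term.relabel_app, eraseMark_en, hvs]
    · exact energetic_app_iff.2 ⟨good_en f le_rfl,
        fun u hu => (he.2 u hu).mono (Nat.le_succ n)⟩
  | select f xs y zs =>
    obtain ⟨p, vs, rfl, hp, hvs⟩ := relabel_eq_app hv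
    replace he := energetic_app_iff.1 he
    obtain ⟨m, rfl⟩ := eraseMark_eq_star hp he.1.1
    have hm : n + 1 ≤ m := he.1.2 m rfl
    obtain ⟨m', rfl⟩ : ∃ m', m = m' + 1 := ⟨m - 1, by omega⟩
    obtain ⟨xs', rest, rfl, hxs, hrest⟩ := List.map_eq_append_iff.1 hvs
    obtain ⟨y', zs', rfl, hy, hzs⟩ := List.map_eq_cons_iff.1 hrest
    refine ⟨y', .select f m' xs' y' zs', hy, ?_⟩
    exact (he.2 y' (by simp)).mono (Nat.le_succ n)
  | copy f g k ts hlt =>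
    obtain ⟨p, vs, rfl, hp, hvs⟩ := relabel_eq_app hv
    replace he := energetic_app_iff.1 he
    obtain ⟨m, rfl⟩ := eraseMark_eq_star hp he.1.1
    have hm : n + 1 ≤ m := he.1.2 m rfl
    obtain ⟨m', rfl⟩ : ∃ m', m = m' + 1 := ⟨m - 1, by omega⟩
    refine ⟨Term.app (g, Mark.plain) (List.replicate k (Term.app (f, Mark.en m') vs)),
      .copy f g m' k vs hlt, ?_, ?_⟩
    · rw [Term.relabel_app, eraseMark_plain, List.map_replicate, Term.relabel_app,
        eraseMark_en, hvs]
    · refine energetic_app_iff.2 ⟨good_plain n g, fun u hu => ?_⟩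
      rw [List.eq_of_mem_replicate hu]
      exact energetic_app_iff.2 ⟨good_en f (by omega),
        fun u hu => (he.2 u hu).mono (Nat.le_succ n)⟩
  | down f g k xs ys zs =>
    obtain ⟨p, vs, rfl, hp, hvs⟩ := relabel_eq_app hv
    replace he := energetic_app_iff.1 he
    obtain ⟨m, rfl⟩ := eraseMark_eq_star hp he.1.1
    have hm : n + 1 ≤ m := he.1.2 m rfl
    obtain ⟨m', rfl⟩ : ∃ m', m = m' + 1 := ⟨m - 1, by omega⟩
    obtain ⟨xs', rest, rfl, hxs, hrest⟩ := List.map_eq_append_iff.1 hvs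
    obtain ⟨c, zs', rfl, hc, hzs⟩ := List.map_eq_cons_iff.1 hrest
    obtain ⟨q, ys', rfl, hq, hys⟩ := relabel_eq_app hc
    obtain rfl := eraseMark_eq_plain hq
    have hcmem : Energetic (n+1) (Term.app (g, Mark.plain) ys') := he.2 _ (by simp)
    replace hcmem := energetic_app_iff.1 hcmem
    refine ⟨Term.app (f, Mark.plain)
        (xs' ++ List.replicate k (Term.app (g, Mark.en m') ys') ++ zs'),
      .down f g m' k xs' ys' zs', ?_, ?_⟩
    · rw [Term.relabel_app, eraseMark_plain]
      simp only [List.map_append, List.map_replicate, Term.relabel_app, eraseMark_en,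
        hxs, hys, hzs]
    · refine energetic_app_iff.2 ⟨good_plain n f, fun u hu => ?_⟩
      simp only [List.mem_append] at hu
      rcases hu with (hu | hu) | hu
      · exact (he.2 u (by simp [hu])).mono (Nat.le_succ n)
      · rw [List.eq_of_mem_replicate hu]
        exact energetic_app_iff.2 ⟨good_en g (by omega),
          fun u hu => (hcmem.2 u hu).mono (Nat.le_succ n)⟩
      · exact (he.2 u (by simp [hu])).mono (Nat.le_succ n)

theorem rewrite_lift {lt : σ → σ → Prop} {a b : Term (σ × Mark) X}
    (h : Rewrite (StarRootM lt) a b) :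
    ∀ (n : ℕ) (v : Term (σ × Mark) X), v.relabel eraseMark = a → Energetic (n + 1) v →
      ∃ w, Rewrite (StarOmegaRootM lt) v w ∧ w.relabel eraseMark = b ∧ Energetic n w := by
  induction h with
  | root h =>
    intro n v hv he
    obtain ⟨w, h1, h2, h3⟩ := step_lift h hv he
    exact ⟨w, .root h1, h2, h3⟩
  | congr f pre post hst ih =>
    intro n v hv he
    obtain ⟨p, vs, rfl, hp, hvs⟩ := relabel_eq_app hv
    replace he := energetic_app_iff.1 he
    obtain ⟨pre', rest, rfl, hpre, hrest⟩ := List.map_eq_append_iff.1 hvs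
    obtain ⟨s', post', rfl, hs, hpost⟩ := List.map_eq_cons_iff.1 hrest
    obtain ⟨w', h1, h2, h3⟩ := ih n s' hs (he.2 s' (by simp))
    refine ⟨Term.app p (pre' ++ w' :: post'), .congr p pre' post' h1, ?_, ?_⟩
    · rw [Term.relabel_app]
      simp [hpre, hpost, h2, hp]
    · refine energetic_app_iff.2 ⟨he.1.mono (Nat.le_succ n), fun u hu => ?_⟩
      simp only [List.mem_append, List.mem_cons] at hu
      rcases hu with hu | rfl | hu
      · exact (he.2 u (by simp [hu])).mono (Nat.le_succ n)
      · exact h3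
      · exact (he.2 u (by simp [hu])).mono (Nat.le_succ n)

end Aux4
section Aux5

variable {σ X : Type}

theorem main_forward {lt : σ → σ → Prop} {A : Tree (σ × Mark) X}
    {t : Term (σ × Mark) X} (ht : UnmarkedTerm t)
    (h : Relation.TransGen (TreeRel (StarRootM lt)) A (Tree.mk t)) :
    ∃ n : ℕ, ∀ v : Term (σ × Mark) X,
      Tree.mk (v.relabel eraseMark) = A → Energetic n v →
        Relation.TransGen (TreeRel (StarOmegaRootM lt)) (Tree.mk v) (Tree.mk t) := by
  induction h using Relation.TransGen.head_induction_on with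
  | single h =>
    obtain ⟨a, b, hA, hB, hab⟩ := h
    refine ⟨1, fun v hv hev => ?_⟩
    rw [hA] at hv
    have hva : TermEquiv (v.relabel eraseMark) a := Tree.mk_eq_mk.1 hv
    obtain ⟨v', hvv', hv'a⟩ := (termEquiv_lift hva).1 v rfl
    have hev' : Energetic 1 v' := (uses_iff_of_equiv hvv').1 hev
    obtain ⟨w, h1, h2, _⟩ := rewrite_lift hab 0 v' hv'a hev'
    have hbt : TermEquiv t b := Tree.mk_eq_mk.1 hB
    have hbu : UnmarkedTerm b := (uses_iff_of_equiv hbt).1 ht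
    obtain rfl := eq_of_relabel_eraseMark hbu w h2
    refine Relation.TransGen.single ⟨v', w, Tree.mk_eq_mk.2 hvv', hB, h1⟩
  | head hAC hCB ih =>
    obtain ⟨n, hn⟩ := ih
    obtain ⟨a, c, hA, hC, hac⟩ := hAC
    refine ⟨n + 1, fun v hv hev => ?_⟩
    rw [hA] at hv
    have hva : TermEquiv (v.relabel eraseMark) a := Tree.mk_eq_mk.1 hv
    obtain ⟨v', hvv', hv'a⟩ := (termEquiv_lift hva).1 v rfl
    have hev' : Energetic (n + 1) v' := (uses_iff_of_equiv hvv').1 hev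
    obtain ⟨w, h1, h2, h3⟩ := rewrite_lift hac n v' hv'a hev'
    have hw : Relation.TransGen (TreeRel (StarOmegaRootM lt)) (Tree.mk w) (Tree.mk t) :=
      hn w (by rw [h2, hC]) h3
    exact hw.head ⟨v', w, Tree.mk_eq_mk.2 hvv', rfl, h1⟩

end Aux5
/-- Let `(Σ, <)` be a well-founded partial order.  The relations `▷⁺` and `▷▷⁺`
coincide on unmarked trees: for all trees `s, t` over `Σ` containing no marked
and no energized symbols, `s ▷⁺ t` iff `s ▷▷⁺ t`. -/
theorem star_transGen_iff_starOmega_transGen_on_unmarked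
    {σ X : Type} [Countable X] [Infinite X]
    (lt : σ → σ → Prop) (hirr : Irreflexive lt) (htrans : Transitive lt)
    (hwf : WellFounded lt)
    (s t : Term (σ × Mark) X) (hs : UnmarkedTerm s) (ht : UnmarkedTerm t) :
    Relation.TransGen (TreeRel (StarRootM lt)) (Tree.mk s) (Tree.mk t) ↔
      Relation.TransGen (TreeRel (StarOmegaRootM lt)) (Tree.mk s) (Tree.mk t) := by
  constructor
  · intro h
    obtain ⟨n, hn⟩ := main_forward ht h
    exact hn s (by rw [relabel_eraseMark_of_unmarked hs]) (Energetic.of_unmarked hs n)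
  · intro h
    have : Relation.TransGen _ (Tree.relabelE _) (Tree.relabelE _) := Relation.TransGen.lift Tree.relabelE
      (fun A B hab => treeRel_omega_to_star hab) _ _ h
    rwa [Tree.relabelE_mk, Tree.relabelE_mk, relabel_eraseMark_of_unmarked hs,
      relabel_eraseMark_of_unmarked ht] at this

end StarGames
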